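/- For every n, the map σ_i that swaps literals x_i and y_i, swaps x̄_i and ȳ_i, swaps a_i and ā_i, and fixes all other literals, is a syntactic symmetry of the QBF KBKF_n: it is admissible for the prefix (it respects negation and only permutes variables within the same quantifier block) and maps the set of clauses of KBKF_n to itself. -/

import Mathlib

/-! Generic framework for QBFs in prenex CNF. -/

inductive Q
  | ex
  | all
deriving DecidableEq

abbrev Lit (V : Type) := V × Bool
abbrev Clause (V : Type) := Finset (Lit V)
abbrev Cnf (V : Type) := Finset (Clause V)
abbrev QPrefix (V : Type) := List (Q × V)

variable {V : Type} [DecidableEq V]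

/-- Negation of a literal. -/
def negLit (l : Lit V) : Lit V := (l.1, !l.2)

/-- Evaluation of a literal under an assignment. -/
def evalLit (τ : V → Bool) (l : Lit V) : Bool := if l.2 then τ l.1 else !(τ l.1)

/-- An assignment satisfies a clause if some literal evaluates to true. -/
def SatClause (τ : V → Bool) (C : Clause V) : Prop := ∃ l ∈ C, evalLit τ l = true

/-- An assignment satisfies a CNF if it satisfies all clauses. -/
def SatCnf (τ : V → Bool) (φ : Cnf V) : Prop := ∀ C ∈ φ, SatClause τ C

/-- Recursive semantics of a quantifier prefix over a matrix predicate. -/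
def QTrue : QPrefix V → (V → Bool) → ((V → Bool) → Prop) → Prop
  | [], τ, M => M τ
  | (Q.ex, v) :: P, τ, M => ∃ b, QTrue P (Function.update τ v b) M
  | (Q.all, v) :: P, τ, M => ∀ b, QTrue P (Function.update τ v b) M

/-- Truth of a prenex CNF QBF (closed; the default assignment is irrelevant). -/
def QBFTrue (P : QPrefix V) (φ : Cnf V) : Prop :=
  QTrue P (fun _ => false) (fun τ => SatCnf τ φ)

/-- Two variables are in the same quantifier block of a prefix. -/
def SameBlock (P : QPrefix V) (v w : V) : Prop :=
  ∃ i j : ℕ, (∃ q : Q, P[i]? = some (q, v)) ∧ (∃ q : Q, P[j]? = some (q, w)) ∧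
    ∀ (k₁ k₂ : ℕ) (e₁ e₂ : Q × V), min i j ≤ k₁ → k₁ ≤ k₂ → k₂ ≤ max i j →
      P[k₁]? = some e₁ → P[k₂]? = some e₂ → e₁.1 = e₂.1

/-- An admissible literal map for a prefix: a bijection on literals commuting with
negation and moving variables only within their quantifier block. -/
structure Admissible (P : QPrefix V) (σ : Lit V → Lit V) : Prop where
  bij : Function.Bijective σ
  neg : ∀ l, σ (negLit l) = negLit (σ l)
  block : ∀ v w b c, σ (v, b) = (w, c) → v ≠ w → SameBlock P v w

/-- Action of a literal map on a clause. -/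
def mapClause (σ : Lit V → Lit V) (C : Clause V) : Clause V := C.image σ

/-- A (syntactic) symmetry of a QBF: an admissible map sending the clause set to itself. -/
def IsSymmetry (P : QPrefix V) (φ : Cnf V) (σ : Lit V → Lit V) : Prop :=
  Admissible P σ ∧ φ.image (mapClause σ) = φ

def IsExist (P : QPrefix V) (v : V) : Prop := (Q.ex, v) ∈ P
def IsUniv (P : QPrefix V) (v : V) : Prop := (Q.all, v) ∈ P

/-- A clause is a tautology if it contains complementary literals. -/
def Tauto (C : Clause V) : Prop := ∃ l ∈ C, negLit l ∈ C

/-- Rule R of Q-Res: resolution over an existential variable, with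
non-tautological resolvent. -/
def ResStep (P : QPrefix V) (E₁ E₂ E : Clause V) : Prop :=
  ∃ x, IsExist P x ∧ (x, true) ∈ E₁ ∧ (x, false) ∈ E₂ ∧
    E = E₁.erase (x, true) ∪ E₂.erase (x, false) ∧ ¬ Tauto E

/-- Prefix order on variables: `v` occurs strictly before `w`. -/
def LtP (P : QPrefix V) (v w : V) : Prop :=
  ∃ i j : ℕ, i < j ∧ (∃ q : Q, P[i]? = some (q, v)) ∧ (∃ q : Q, P[j]? = some (q, w))

/-- Rule U of Q-Res: universal reduction. -/
def URed (P : QPrefix V) (F₁ F : Clause V) : Prop :=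
  ∃ l, IsUniv P l.1 ∧ l ∈ F₁ ∧ negLit l ∉ F₁ ∧ F = F₁.erase l ∧
    ∀ k ∈ F₁.erase l, IsExist P k.1 → LtP P k.1 l.1

/-- Derivability in Q-Res (rules A, R, U). -/
inductive Derives (P : QPrefix V) (φ : Cnf V) : Clause V → Prop
  | ax {C : Clause V} : C ∈ φ → Derives P φ C
  | res {E₁ E₂ E : Clause V} :
      Derives P φ E₁ → Derives P φ E₂ → ResStep P E₁ E₂ E → Derives P φ E
  | ured {F₁ F : Clause V} : Derives P φ F₁ → URed P F₁ F → Derives P φ F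

/-- Derivability in Q-Res+S (rules A, R, U, S). -/
inductive DerivesS (P : QPrefix V) (φ : Cnf V) : Clause V → Prop
  | ax {C : Clause V} : C ∈ φ → DerivesS P φ C
  | res {E₁ E₂ E : Clause V} :
      DerivesS P φ E₁ → DerivesS P φ E₂ → ResStep P E₁ E₂ E → DerivesS P φ E
  | ured {F₁ F : Clause V} : DerivesS P φ F₁ → URed P F₁ F → DerivesS P φ F
  | sym {C : Clause V} {σ : Lit V → Lit V} :
      DerivesS P φ C → IsSymmetry P φ σ → DerivesS P φ (mapClause σ C)

/-- A clause available at step `i` of a derivation sequence: an input clause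
(axiom rule A, not counted as a step) or an earlier line. -/
def Avail (φ : Cnf V) (D : List (Clause V)) (i : ℕ) (C : Clause V) : Prop :=
  C ∈ φ ∨ ∃ j, ∃ _ : j < i, ∃ hj : j < D.length, D[j]'hj = C

/-- Line `C` at position `i` is justified by rule R or U from available clauses. -/
def StepOK (P : QPrefix V) (φ : Cnf V) (D : List (Clause V)) (i : ℕ) (C : Clause V) : Prop :=
  (∃ E₁ E₂, Avail φ D i E₁ ∧ Avail φ D i E₂ ∧ ResStep P E₁ E₂ C) ∨
  (∃ F₁, Avail φ D i F₁ ∧ URed P F₁ C)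

/-- Line justified by rule R, U or the symmetry rule S. -/
def StepOKS (P : QPrefix V) (φ : Cnf V) (D : List (Clause V)) (i : ℕ) (C : Clause V) : Prop :=
  StepOK P φ D i C ∨
  (∃ F₁ σ, Avail φ D i F₁ ∧ IsSymmetry P φ σ ∧ C = mapClause σ F₁)

/-- A Q-Res refutation, as a sequence of R/U steps ending in the empty clause;
its length is the number of R and U applications. -/
def IsRefutation (P : QPrefix V) (φ : Cnf V) (D : List (Clause V)) : Prop :=
  (∀ i (hi : i < D.length), StepOK P φ D i (D[i]'hi)) ∧ D.getLast? = some (∅ : Clause V)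

/-- A Q-Res+S refutation. -/
def IsRefutationS (P : QPrefix V) (φ : Cnf V) (D : List (Clause V)) : Prop :=
  (∀ i (hi : i < D.length), StepOKS P φ D i (D[i]'hi)) ∧ D.getLast? = some (∅ : Clause V)

/-- A derivation sequence using rules A, R, U: every line is an input clause or
follows from earlier lines by R or U. -/
def IsDerivation (P : QPrefix V) (φ : Cnf V) (D : List (Clause V)) : Prop :=
  ∀ i (hi : i < D.length), (D[i]'hi) ∈ φ ∨
    (∃ j k, ∃ hj : j < i, ∃ hk : k < i,
      ResStep P (D[j]'(Nat.lt_trans hj hi)) (D[k]'(Nat.lt_trans hk hi)) (D[i]'hi)) ∨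
    (∃ j, ∃ hj : j < i, URed P (D[j]'(Nat.lt_trans hj hi)) (D[i]'hi))

/-! The KBKF formula family (variables indexed 1..n). -/

inductive KV
  | x (i : ℕ)
  | y (i : ℕ)
  | a (i : ℕ)
  | z (i : ℕ)
deriving DecidableEq

/-- Prefix ∃x₁y₁∀a₁ … ∃xₙyₙ∀aₙ ∃z₁…zₙ. -/
def kPrefix (n : ℕ) : QPrefix KV :=
  ((List.range n).flatMap
    (fun j => [(Q.ex, KV.x (j+1)), (Q.ex, KV.y (j+1)), (Q.all, KV.a (j+1))])) ++
  (List.range n).map (fun j => (Q.ex, KV.z (j+1)))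

/-- The tail z̄₁ ∨ … ∨ z̄ₙ. -/
def kZneg (n : ℕ) : Clause KV := (Finset.range n).image (fun j => ((KV.z (j+1), false) : Lit KV))

/-- The clauses of KBKF_n. -/
def kbkf (n : ℕ) : Cnf KV :=
  {({(KV.x 1, false), (KV.y 1, false)} : Clause KV)} ∪
  ((Finset.range (n-1)).image (fun j =>
    ({(KV.x (j+1), true), (KV.a (j+1), false), (KV.x (j+2), false), (KV.y (j+2), false)} : Clause KV))) ∪
  ((Finset.range (n-1)).image (fun j =>
    ({(KV.y (j+1), true), (KV.a (j+1), true), (KV.x (j+2), false), (KV.y (j+2), false)} : Clause KV))) ∪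
  {({(KV.x n, true), (KV.a n, false)} : Clause KV) ∪ kZneg n,
   ({(KV.y n, true), (KV.a n, true)} : Clause KV) ∪ kZneg n} ∪
  ((Finset.range n).image (fun j => ({(KV.a (j+1), true), (KV.z (j+1), true)} : Clause KV))) ∪
  ((Finset.range n).image (fun j => ({(KV.a (j+1), false), (KV.z (j+1), true)} : Clause KV)))

/-- The symmetry σᵢ = (xᵢ yᵢ)(x̄ᵢ ȳᵢ)(aᵢ āᵢ) of KBKF_n. -/
def kSigma (i : ℕ) : Lit KV → Lit KV
  | (KV.x j, b) => if j = i then (KV.y j, b) else (KV.x j, b)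
  | (KV.y j, b) => if j = i then (KV.x j, b) else (KV.y j, b)
  | (KV.a j, b) => if j = i then (KV.a j, !b) else (KV.a j, b)
  | (KV.z j, b) => (KV.z j, b)

/-- The symmetry breaker ψₙ = (x̄₁∨y₁) ∧ … ∧ (x̄ₙ∨yₙ) for KBKF_n. -/
def kPsi (n : ℕ) : Cnf KV :=
  (Finset.range n).image (fun j => ({(KV.x (j+1), false), (KV.y (j+1), true)} : Clause KV))

/-! The QUPARITY formula family. -/

inductive PV
  | x (i : ℕ)
  | a (i : ℕ)
  | y (i : ℕ)
deriving DecidableEq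

/-- Prefix ∃x₁…xₙ ∀a₁a₂ ∃y₂…yₙ. -/
def pPrefix (n : ℕ) : QPrefix PV :=
  (List.range n).map (fun j => ((Q.ex, PV.x (j+1)) : Q × PV)) ++
  [(Q.all, PV.a 1), (Q.all, PV.a 2)] ++
  (List.range (n-1)).map (fun k => ((Q.ex, PV.y (k+2)) : Q × PV))

/-- a₁ ∨ a₂ with sign `s` (s = true: unprimed clauses, s = false: primed clauses). -/
def pAA (s : Bool) : Clause PV := {(PV.a 1, s), (PV.a 2, s)}

/-- The clauses of QUPARITY_n. -/
def quparity (n : ℕ) : Cnf PV :=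
  ((Finset.univ : Finset Bool).biUnion (fun s =>
    ({({(PV.x 1, false), (PV.x 2, false), (PV.y 2, false)} : Clause PV) ∪ pAA s,
      ({(PV.x 1, false), (PV.x 2, true), (PV.y 2, true)} : Clause PV) ∪ pAA s,
      ({(PV.x 1, true), (PV.x 2, false), (PV.y 2, true)} : Clause PV) ∪ pAA s,
      ({(PV.x 1, true), (PV.x 2, true), (PV.y 2, false)} : Clause PV) ∪ pAA s} : Cnf PV) ∪
    ((Finset.range (n-2)).biUnion (fun k =>
      ({({(PV.y (k+2), false), (PV.x (k+3), false), (PV.y (k+3), false)} : Clause PV) ∪ pAA s,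
        ({(PV.y (k+2), false), (PV.x (k+3), true), (PV.y (k+3), true)} : Clause PV) ∪ pAA s,
        ({(PV.y (k+2), true), (PV.x (k+3), false), (PV.y (k+3), true)} : Clause PV) ∪ pAA s,
        ({(PV.y (k+2), true), (PV.x (k+3), true), (PV.y (k+3), false)} : Clause PV) ∪ pAA s} : Cnf PV))))) ∪
  {({(PV.a 1, true), (PV.a 2, true), (PV.y n, true)} : Clause PV),
   ({(PV.a 1, false), (PV.a 2, false), (PV.y n, false)} : Clause PV)}

/-- The symmetry σ₁ = (x₁ x₂)(x̄₁ x̄₂) of QUPARITY_n. -/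
def pSigma1 : Lit PV → Lit PV
  | (PV.x 1, b) => (PV.x 2, b)
  | (PV.x 2, b) => (PV.x 1, b)
  | l => l

/-- The symmetry σᵢ = (xᵢ x̄ᵢ)(a₁ ā₁)(a₂ ā₂)(yᵢ ȳᵢ)⋯(yₙ ȳₙ) of QUPARITY_n, 2 ≤ i ≤ n. -/
def pSigma (n i : ℕ) : Lit PV → Lit PV
  | (PV.x j, b) => if j = i then (PV.x j, !b) else (PV.x j, b)
  | (PV.a j, b) => if j = 1 ∨ j = 2 then (PV.a j, !b) else (PV.a j, b)
  | (PV.y j, b) => if i ≤ j ∧ j ≤ n then (PV.y j, !b) else (PV.y j, b)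

/-- The symmetry breaker ψₙ = (x̄₁ ∨ x₂) ∧ x̄₂ ∧ … ∧ x̄ₙ for QUPARITY_n. -/
def pPsi (n : ℕ) : Cnf PV :=
  {({(PV.x 1, false), (PV.x 2, true)} : Clause PV)} ∪
  (Finset.range (n-1)).image (fun k => ({(PV.x (k+2), false)} : Clause PV))

/-! The modified family KBKF'_n with blocking universal variables b_j. -/

inductive KV2
  | x (i : ℕ)
  | b (i : ℕ)
  | y (i : ℕ)
  | a (i : ℕ)
  | z (i : ℕ)
deriving DecidableEq

/-- Prefix ∃x₁∀b₁∃y₁∀a₁ … ∃xₙ∀bₙ∃yₙ∀aₙ ∃z₁…zₙ of KBKF'_n. -/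
def k2Prefix (n : ℕ) : QPrefix KV2 :=
  ((List.range n).flatMap
    (fun j => [(Q.ex, KV2.x (j+1)), (Q.all, KV2.b (j+1)),
               (Q.ex, KV2.y (j+1)), (Q.all, KV2.a (j+1))])) ++
  (List.range n).map (fun j => (Q.ex, KV2.z (j+1)))

/-- The map σᵢ = (xᵢ yᵢ)(x̄ᵢ ȳᵢ)(aᵢ āᵢ) on the literals of KBKF'_n. -/
def k2Sigma (i : ℕ) : Lit KV2 → Lit KV2
  | (KV2.x j, c) => if j = i then (KV2.y j, c) else (KV2.x j, c)
  | (KV2.y j, c) => if j = i then (KV2.x j, c) else (KV2.y j, c)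
  | (KV2.a j, c) => if j = i then (KV2.a j, !c) else (KV2.a j, c)
  | (KV2.b j, c) => (KV2.b j, c)
  | (KV2.z j, c) => (KV2.z j, c)

/-!
σᵢ is an involution commuting with negation, and the only variables it moves are xᵢ and yᵢ,
which are adjacent existentials of the same block of the prefix. On clauses it fixes x̄ⱼ ∨ ȳⱼ
and z̄₁ ∨ … ∨ z̄ₙ setwise and, for j = i, exchanges the heads xᵢ ∨ āᵢ and yᵢ ∨ aᵢ (and aᵢ and āᵢ
in B₂ᵢ₋₁, B₂ᵢ), so it maps every clause of KBKF_n to a clause of KBKF_n; an involution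
mapping a finite set into itself permutes it.
-/

open Function

theorem Finset.image_eq_self_of_involutive {α : Type*} [DecidableEq α] {f : α → α}
    (hf : Involutive f) {s : Finset α} (hs : ∀ a ∈ s, f a ∈ s) : s.image f = s :=
  (image_subset_iff.2 hs).antisymm fun a ha => mem_image.2 ⟨f a, hs a ha, hf a⟩

theorem List.getElem?_flatMap_range {α : Type*} {m : ℕ} (f : ℕ → List α)
    (hf : ∀ j, (f j).length = m) {n j k : ℕ} (hj : j < n) (hk : k < m) :
    ((List.range n).flatMap f)[m * j + k]? = (f j)[k]? := by
  induction n with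
  | zero => omega
  | succ n ih =>
    have hlen : ((List.range n).flatMap f).length = m * n := by
      simp [List.length_flatMap, hf, mul_comm]
    rw [List.range_succ, List.flatMap_append]
    rcases Nat.lt_succ_iff_lt_or_eq.1 hj with hj | rfl
    · rw [List.getElem?_append_left (by rw [hlen]; nlinarith), ih hj]
    · rw [List.getElem?_append_right (by omega), hlen]
      simp

section
variable {V : Type}

theorem SameBlock.symm {P : QPrefix V} {v w : V} (h : SameBlock P v w) : SameBlock P w v := by
  obtain ⟨i, j, hv, hw, hq⟩ := h
  exact ⟨j, i, hw, hv, by simpa only [min_comm, max_comm] using hq⟩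

theorem sameBlock_of_getElem?_succ {P : QPrefix V} {k : ℕ} {q : Q} {v w : V}
    (hv : P[k]? = some (q, v)) (hw : P[k + 1]? = some (q, w)) : SameBlock P v w := by
  refine ⟨k, k + 1, ⟨q, hv⟩, ⟨q, hw⟩, fun k₁ k₂ e₁ e₂ h₁ _ h₂ he₁ he₂ => ?_⟩
  have hq (k' : ℕ) (e : Q × V) (hk' : k' = k ∨ k' = k + 1) (he : P[k']? = some e) : e.1 = q := by
    rcases hk' with rfl | rfl
    · obtain rfl := Option.some_injective _ (hv.symm.trans he); rfl
    · obtain rfl := Option.some_injective _ (hw.symm.trans he); rfl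
  rw [hq k₁ e₁ (by omega) he₁, hq k₂ e₂ (by omega) he₂]

variable [DecidableEq V]

theorem mapClause_involutive {σ : Lit V → Lit V} (hσ : Involutive σ) : Involutive (mapClause σ) :=
  fun C => by simp only [mapClause, Finset.image_image, hσ.comp_self, Finset.image_id]

theorem mapClause_insert (σ : Lit V → Lit V) (l : Lit V) (C : Clause V) :
    mapClause σ (insert l C) = insert (σ l) (mapClause σ C) :=
  Finset.image_insert σ l C

theorem mapClause_singleton (σ : Lit V → Lit V) (l : Lit V) :
    mapClause σ {l} = {σ l} :=
  Finset.image_singleton σ l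

theorem mapClause_union (σ : Lit V → Lit V) (C D : Clause V) :
    mapClause σ (C ∪ D) = mapClause σ C ∪ mapClause σ D :=
  Finset.image_union C D

end

section KBKF
variable {n i : ℕ}

theorem kPrefix_getElem?_x_y {j : ℕ} (hj : j < n) :
    (kPrefix n)[3 * j]? = some (Q.ex, KV.x (j + 1)) ∧
    (kPrefix n)[3 * j + 1]? = some (Q.ex, KV.y (j + 1)) := by
  have hlen : ((List.range n).flatMap fun k =>
      [(Q.ex, KV.x (k+1)), (Q.ex, KV.y (k+1)), (Q.all, KV.a (k+1))]).length = 3 * n := by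
    simp [List.length_flatMap, mul_comm]
  unfold kPrefix
  rw [List.getElem?_append_left (by omega), List.getElem?_append_left (by omega)]
  exact ⟨List.getElem?_flatMap_range (m := 3) (k := 0) _ (fun _ => rfl) hj (by norm_num),
    List.getElem?_flatMap_range (m := 3) (k := 1) _ (fun _ => rfl) hj (by norm_num)⟩

theorem sameBlock_kPrefix_x_y (h1 : 1 ≤ i) (h2 : i ≤ n) :
    SameBlock (kPrefix n) (KV.x i) (KV.y i) := by
  obtain ⟨j, rfl⟩ : ∃ j, i = j + 1 := ⟨i - 1, by omega⟩
  obtain ⟨hx, hy⟩ := kPrefix_getElem?_x_y (n := n) (j := j) (by omega)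
  exact sameBlock_of_getElem?_succ hx hy

theorem kSigma_involutive (i : ℕ) : Involutive (kSigma i) := by
  rintro ⟨v | v | v | v, b⟩ <;> by_cases h : v = i <;> simp [kSigma, h]

theorem kSigma_negLit (i : ℕ) (l : Lit KV) : kSigma i (negLit l) = negLit (kSigma i l) := by
  obtain ⟨v | v | v | v, b⟩ := l <;> by_cases h : v = i <;> simp [kSigma, negLit, h]

theorem kSigma_moves_only_x_y {v w : KV} {b c : Bool} (h : kSigma i (v, b) = (w, c)) (hvw : v ≠ w) :
    v = KV.x i ∧ w = KV.y i ∨ v = KV.y i ∧ w = KV.x i := by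
  rcases v with j | j | j | j <;> by_cases hj : j = i <;> simp_all [kSigma]

theorem admissible_kSigma (h1 : 1 ≤ i) (h2 : i ≤ n) : Admissible (kPrefix n) (kSigma i) where
  bij := (kSigma_involutive i).bijective
  neg := kSigma_negLit i
  block _ _ _ _ h hvw := by
    rcases kSigma_moves_only_x_y h hvw with ⟨rfl, rfl⟩ | ⟨rfl, rfl⟩
    · exact sameBlock_kPrefix_x_y h1 h2
    · exact (sameBlock_kPrefix_x_y h1 h2).symm

theorem mapClause_kSigma_negPair (j : ℕ) :
    mapClause (kSigma i) {(KV.x j, false), (KV.y j, false)} = {(KV.x j, false), (KV.y j, false)} := by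
  by_cases h : j = i <;> simp [mapClause, kSigma, h, Finset.pair_comm]

theorem mapClause_kSigma_kZneg : mapClause (kSigma i) (kZneg n) = kZneg n := by
  simp only [mapClause, kZneg, Finset.image_image]
  rfl

theorem mapClause_kSigma_mem_kbkf {C : Clause KV} (hC : C ∈ kbkf n) :
    mapClause (kSigma i) C ∈ kbkf n := by
  simp only [kbkf, Finset.mem_union, Finset.mem_insert, Finset.mem_singleton,
    Finset.mem_image, Finset.mem_range] at hC
  -- `↓` rewrites `x̄ⱼ ∨ ȳⱼ` as a whole before `mapClause_insert` splits it into literals.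
  rcases hC with (((((rfl | ⟨j, hj, rfl⟩) | ⟨j, hj, rfl⟩) | (rfl | rfl)) | ⟨j, hj, rfl⟩) | ⟨j, hj, rfl⟩) <;>
    simp only [↓mapClause_kSigma_negPair, mapClause_insert, mapClause_singleton, mapClause_union,
      mapClause_kSigma_kZneg, kSigma] <;>
    simp only [kbkf, Finset.mem_union, Finset.mem_insert, Finset.mem_singleton, Finset.mem_image,
      Finset.mem_range, Bool.not_true, Bool.not_false] <;>
    grind

end KBKF

/-- each σᵢ (1 ≤ i ≤ n) is a syntactic symmetry of KBKF_n. -/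
theorem kSigma_isSymmetry : ∀ n i : ℕ, 1 ≤ i → i ≤ n →
    IsSymmetry (kPrefix n) (kbkf n) (kSigma i) := fun _ i h1 h2 =>
  ⟨admissible_kSigma h1 h2,
    Finset.image_eq_self_of_involutive (mapClause_involutive (kSigma_involutive i))
      fun _ => mapClause_kSigma_mem_kbkf⟩
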